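/- Let R ∈ 𝔣(V,g). Then: (1) p(R) = R + (1/(n−1))(Ric ∧ g), where Ric := Ric(R); (2) if additionally R* ∈ 𝔯(V), then p(R) = π₅(R) + π₆(R) + π₇(R), and the following three conditions are equivalent: (a) p(R*) = p(R); (b) R* = R; (c) R ∈ 𝔞(V); (3) if additionally R* ∈ 𝔯(V) and p(R*) = 0, then B* := S[Ric*(R) + (n−1)Ric(R)] − τ(R)·g = 0. -/

import Mathlib

/-!
For equiaffine `R` the symmetric part of `Ric` is all of `Ric`, so `π₁ + π₂ = -(1/(n-1)) Ric ∧ g`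
(the scalar terms cancel) and `π₃ = 0`; this is (1). If `R*` also satisfies the first Bianchi
identity, contracting the two Bianchi identities shows that `Ric + Ric*` is symmetric, hence so
is `Ric*`, and the two identities together give `R = ψ(R) + μ(R)`; the decomposition in (2) is
then an identity between the wedge terms. For the rest, apply `Ric*` to (1): since
`Ric*(R*) = Ric(R)` and `Ric*(h ∧ g) = h - (tr_g h) g`, the equation `p(R*) = p(R)`
(resp. `p(R*) = 0`) becomes a linear relation between `Ric` and `Ric*`; its trace gives
`tr_g Ric = tr_g Ric*`, and then `Ric = Ric*` (resp. `B* = 0`).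
-/

open scoped BigOperators
open Pointwise

namespace GCT

variable {V : Type*} [AddCommGroup V] [Module ℝ V]

/-- Linearity of a real valued function of one vector variable. -/
def IsLin (f : V → ℝ) : Prop :=
  (∀ x y : V, f (x + y) = f x + f y) ∧ (∀ (c : ℝ) (x : V), f (c • x) = c * f x)

/-- Bilinearity. -/
def IsBilin (h : V → V → ℝ) : Prop :=
  (∀ y, IsLin (fun x => h x y)) ∧ (∀ x, IsLin (fun y => h x y))

/-- 4-linearity. -/
def IsMulti4 (F : V → V → V → V → ℝ) : Prop :=
  (∀ y z w, IsLin (fun x => F x y z w)) ∧ (∀ x z w, IsLin (fun y => F x y z w)) ∧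
    (∀ x y w, IsLin (fun z => F x y z w)) ∧ (∀ x y z, IsLin (fun w => F x y z w))

/-- The space 𝔯(V) of generalized curvature tensors. -/
def rSet (V : Type*) [AddCommGroup V] [Module ℝ V] : Set (V → V → V → V → ℝ) :=
  {F | IsMulti4 F ∧ (∀ x y z w, F x y z w = - F y x z w) ∧
    (∀ x y z w, F x y z w + F y z x w + F z x y w = 0)}

/-- The space 𝔞(V) of algebraic curvature tensors. -/
def aSet (V : Type*) [AddCommGroup V] [Module ℝ V] : Set (V → V → V → V → ℝ) :=
  {F | F ∈ rSet V ∧ ∀ x y z w, F x y z w = - F x y w z}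

/-- The space 𝔰(V). -/
def sSet (V : Type*) [AddCommGroup V] [Module ℝ V] : Set (V → V → V → V → ℝ) :=
  {F | F ∈ rSet V ∧ ∀ x y z w, F x y z w = F x y w z}

/-- The conjugate tensor R*. -/
def conj (F : V → V → V → V → ℝ) : V → V → V → V → ℝ := fun x y z w => - F x y w z

/-- The product h·k of two bilinear forms. -/
def prodB (h k : V → V → ℝ) : V → V → V → V → ℝ := fun x y z w => h x y * k z w

/-- The wedge product h ∧_t k of two bilinear forms. -/
def wedge (t : ℝ) (h k : V → V → ℝ) : V → V → V → V → ℝ :=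
  fun x y z w => h x z * k y w - h y z * k x w - t * (h x w * k y z - h y w * k x z)

/-- Antisymmetric part Λh. -/
noncomputable def lamB (h : V → V → ℝ) : V → V → ℝ := fun x y => (h x y - h y x) / 2

/-- Symmetric part Sh. -/
noncomputable def symB (h : V → V → ℝ) : V → V → ℝ := fun x y => (h x y + h y x) / 2

/-- The idempotent ψ. -/
noncomputable def psi (F : V → V → V → V → ℝ) : V → V → V → V → ℝ :=
  fun x y z w => (F x y z w + F y x w z + F z w x y + F w z y x) / 4

/-- The idempotent μ. -/
noncomputable def mu (F : V → V → V → V → ℝ) : V → V → V → V → ℝ :=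
  fun x y z w =>
    (3 * F x y z w + 3 * F x y w z + F x w z y + F x z w y + F w y z x + F z y w x) / 8

/-- A linear equivalence is a g-isometry. -/
def IsIsometry (g : V → V → ℝ) (φ : V ≃ₗ[ℝ] V) : Prop := ∀ x y, g (φ x) (φ y) = g x y

/-- Pull back of a 4-tensor along a linear equivalence (the natural action). -/
def pullT (φ : V ≃ₗ[ℝ] V) (F : V → V → V → V → ℝ) : V → V → V → V → ℝ :=
  fun x y z w => F (φ x) (φ y) (φ z) (φ w)

/-- Invariance of a set of 4-tensors under the orthogonal group O(V,g). -/
def OInv (g : V → V → ℝ) (S : Set (V → V → V → V → ℝ)) : Prop :=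
  ∀ φ : V ≃ₗ[ℝ] V, IsIsometry g φ → ∀ F ∈ S, pullT φ F ∈ S

/-- Irreducibility of a subspace of 4-tensors as an O(V,g)-module:
there is no proper nonzero invariant subspace. -/
def OIrred (g : V → V → ℝ) (W : Set (V → V → V → V → ℝ)) : Prop :=
  ∀ U : Submodule ℝ (V → V → V → V → ℝ), (U : Set (V → V → V → V → ℝ)) ⊆ W →
    (∀ φ : V ≃ₗ[ℝ] V, IsIsometry g φ → ∀ F ∈ U, pullT φ F ∈ U) →
    (U : Set (V → V → V → V → ℝ)) = {0} ∨ (U : Set (V → V → V → V → ℝ)) = W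

/-- Isomorphism of two invariant subspaces as O(V,g)-modules. -/
def OEquivMod (g : V → V → ℝ) (S T : Set (V → V → V → V → ℝ)) : Prop :=
  ∃ e : (V → V → V → V → ℝ) →ₗ[ℝ] (V → V → V → V → ℝ),
    Set.BijOn e S T ∧
      ∀ φ : V ≃ₗ[ℝ] V, IsIsometry g φ → ∀ F ∈ S, e (pullT φ F) = pullT φ (e F)

variable (n : ℕ) (b : Module.Basis (Fin n) ℝ V) (g : V → V → ℝ)

/-- Inverse metric components g^{ij}. -/
noncomputable def ginv : Matrix (Fin n) (Fin n) ℝ :=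
  (Matrix.of fun i j => g (b i) (b j))⁻¹

/-- Ric(R)(x,y) := Σ g^{ij} R(e_i,x,y,e_j). -/
noncomputable def Ric (F : V → V → V → V → ℝ) : V → V → ℝ :=
  fun x y => ∑ i, ∑ j, ginv n b g i j * F (b i) x y (b j)

/-- Ric*(R)(x,y) := Σ g^{ij} R(x,e_i,e_j,y). -/
noncomputable def RicS (F : V → V → V → V → ℝ) : V → V → ℝ :=
  fun x y => ∑ i, ∑ j, ginv n b g i j * F x (b i) (b j) y

/-- The generalized scalar curvature τ(R). -/
noncomputable def tau (F : V → V → V → V → ℝ) : ℝ :=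
  ∑ i, ∑ j, ∑ k, ∑ l, ginv n b g i l * ginv n b g j k * F (b i) (b j) (b k) (b l)

/-- The g-trace of a bilinear form. -/
noncomputable def trg (h : V → V → ℝ) : ℝ := ∑ i, ∑ j, ginv n b g i j * h (b i) (b j)

/-- The scalar product on 4-tensors given by full contraction with g. -/
noncomputable def inner4 (F T : V → V → V → V → ℝ) : ℝ :=
  ∑ i, ∑ j, ∑ k, ∑ l, ∑ i', ∑ j', ∑ k', ∑ l',
    ginv n b g i i' * ginv n b g j j' * ginv n b g k k' * ginv n b g l l' *
      F (b i) (b j) (b k) (b l) * T (b i') (b j') (b k') (b l')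

/-- W-projection π₁. -/
noncomputable def pi1 (F : V → V → V → V → ℝ) : V → V → V → V → ℝ :=
  (-(tau n b g F) / ((n : ℝ) * ((n : ℝ) - 1))) • wedge 0 g g

/-- W-projection π₂. -/
noncomputable def pi2 (F : V → V → V → V → ℝ) : V → V → V → V → ℝ :=
  ((1 : ℝ) / ((n : ℝ) - 1)) • wedge 0 (((tau n b g F) / (n : ℝ)) • g - symB (Ric n b g F)) g

/-- W-projection π₃. -/
noncomputable def pi3 (F : V → V → V → V → ℝ) : V → V → V → V → ℝ :=
  ((-1 : ℝ) / ((n : ℝ) + 1)) •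
    ((2 : ℝ) • prodB (lamB (Ric n b g F)) g + wedge 0 (lamB (Ric n b g F)) g)

/-- W-projection π₄. -/
noncomputable def pi4 (F : V → V → V → V → ℝ) : V → V → V → V → ℝ :=
  ((-1 : ℝ) / ((n : ℝ) ^ 2 - 4)) •
      ((2 : ℝ) • prodB (lamB (RicS n b g F)) g + wedge ((n : ℝ) + 1) (lamB (RicS n b g F)) g)
    - ((3 : ℝ) / (((n : ℝ) ^ 2 - 4) * ((n : ℝ) + 1))) •
      ((2 : ℝ) • prodB (lamB (Ric n b g F)) g + wedge ((n : ℝ) + 1) (lamB (Ric n b g F)) g)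

/-- W-projection π₅. -/
noncomputable def pi5 (F : V → V → V → V → ℝ) : V → V → V → V → ℝ :=
  ((1 : ℝ) / (((n : ℝ) - 1) * ((n : ℝ) - 2))) •
    ((tau n b g F) • wedge 0 g g -
      ((1 : ℝ) / (n : ℝ)) •
        wedge ((n : ℝ) - 1) (symB (Ric n b g F + ((n : ℝ) - 1) • RicS n b g F)) g)

/-- W-projection π₆. -/
noncomputable def pi6 (F : V → V → V → V → ℝ) : V → V → V → V → ℝ :=
  psi F + ((1 : ℝ) / (2 * ((n : ℝ) - 2))) • wedge 1 (symB (Ric n b g F + RicS n b g F)) g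
    - ((tau n b g F) / (((n : ℝ) - 1) * ((n : ℝ) - 2))) • wedge 0 g g

/-- W-projection π₇. -/
noncomputable def pi7 (F : V → V → V → V → ℝ) : V → V → V → V → ℝ :=
  mu F + ((1 : ℝ) / (2 * (n : ℝ))) • wedge (-1) (symB (Ric n b g F - RicS n b g F)) g
    + ((1 : ℝ) / (2 * ((n : ℝ) + 2))) • prodB (lamB ((3 : ℝ) • Ric n b g F - RicS n b g F)) g
    + ((1 : ℝ) / (4 * ((n : ℝ) + 2))) • wedge (-1) (lamB ((3 : ℝ) • Ric n b g F - RicS n b g F)) g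

/-- W-projection π₈. -/
noncomputable def pi8 (F : V → V → V → V → ℝ) : V → V → V → V → ℝ :=
  F - psi F - mu F
    + ((1 : ℝ) / (2 * ((n : ℝ) - 2))) • prodB (lamB (Ric n b g F + RicS n b g F)) g
    + ((1 : ℝ) / (4 * ((n : ℝ) - 2))) • wedge 3 (lamB (Ric n b g F + RicS n b g F)) g

/-- A-projection α₁. -/
noncomputable def al1 (F : V → V → V → V → ℝ) : V → V → V → V → ℝ :=
  (-(tau n b g F) / ((n : ℝ) * ((n : ℝ) - 1))) • wedge 0 g g

/-- A-projection α₂. -/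
noncomputable def al2 (F : V → V → V → V → ℝ) : V → V → V → V → ℝ :=
  ((-1 : ℝ) / (2 * ((n : ℝ) - 2))) • wedge 1 (symB (Ric n b g F + RicS n b g F)) g
    + ((2 * tau n b g F) / ((n : ℝ) * ((n : ℝ) - 2))) • wedge 0 g g

/-- A-projection α₃. -/
noncomputable def al3 (F : V → V → V → V → ℝ) : V → V → V → V → ℝ :=
  ((-1 : ℝ) / (2 * (n : ℝ))) • wedge (-1) (symB (Ric n b g F - RicS n b g F)) g

/-- A-projection α₄. -/
noncomputable def al4 (F : V → V → V → V → ℝ) : V → V → V → V → ℝ :=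
  ((-1 : ℝ) / (4 * ((n : ℝ) + 2))) •
    ((2 : ℝ) • prodB (lamB ((3 : ℝ) • Ric n b g F - RicS n b g F)) g
      + wedge (-1) (lamB ((3 : ℝ) • Ric n b g F - RicS n b g F)) g)

/-- A-projection α₅. -/
noncomputable def al5 (F : V → V → V → V → ℝ) : V → V → V → V → ℝ :=
  ((-1 : ℝ) / (4 * ((n : ℝ) - 2))) •
    ((2 : ℝ) • prodB (lamB (Ric n b g F + RicS n b g F)) g
      + wedge 3 (lamB (Ric n b g F + RicS n b g F)) g)

/-- A-projection α₆. -/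
noncomputable def al6 (F : V → V → V → V → ℝ) : V → V → V → V → ℝ :=
  psi F - al1 n b g F - al2 n b g F

/-- A-projection α₇. -/
noncomputable def al7 (F : V → V → V → V → ℝ) : V → V → V → V → ℝ :=
  mu F - al3 n b g F - al4 n b g F

/-- A-projection α₈. -/
noncomputable def al8 (F : V → V → V → V → ℝ) : V → V → V → V → ℝ :=
  F - mu F - psi F - al5 n b g F

/-- Curvature tensors of constant curvature type. -/
noncomputable def uSet : Set (V → V → V → V → ℝ) :=
  {F | ∃ c : ℝ, ∀ x y z w, F x y z w = c * (g x w * g y z - g x z * g y w)}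

/-- Ricci traceless algebraic curvature tensors built from a traceless symmetric form. -/
noncomputable def zSet : Set (V → V → V → V → ℝ) :=
  {F | ∃ Xi : V → V → ℝ, IsBilin Xi ∧ (∀ x y, Xi x y = Xi y x) ∧ trg n b g Xi = 0 ∧
    ∀ x y z w, F x y z w = Xi x w * g y z + g x w * Xi y z - Xi x z * g y w - g x z * Xi y w}

/-- Weyl type (Ricci flat algebraic) curvature tensors. -/
noncomputable def wSet : Set (V → V → V → V → ℝ) :=
  {F | F ∈ aSet V ∧ Ric n b g F = fun _ _ => 0}

/-- The projective curvature tensor p(R). -/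
noncomputable def pProj (F : V → V → V → V → ℝ) : V → V → V → V → ℝ :=
  F - pi1 n b g F - pi2 n b g F - pi3 n b g F

lemma IsLin.map_sum_smul {u : V → ℝ} (hu : IsLin u) {ι : Type*} (s : Finset ι)
    (c : ι → ℝ) (v : ι → V) : u (∑ i ∈ s, c i • v i) = ∑ i ∈ s, c i * u (v i) := by
  let L : V →ₗ[ℝ] ℝ := { toFun := u, map_add' := hu.1, map_smul' := hu.2 }
  change L _ = ∑ i ∈ s, c i * L (v i)
  simp only [map_sum, map_smul, smul_eq_mul]

lemma IsLin.eq_sum_repr {u : V → ℝ} (hu : IsLin u) {ι : Type*} [Fintype ι]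
    (e : Module.Basis ι ℝ V) (y : V) : u y = ∑ j, e.repr y j * u (e j) := by
  conv_lhs => rw [← e.sum_repr y]
  exact hu.map_sum_smul _ _ _

lemma IsLin.const_mul {u : V → ℝ} (hu : IsLin u) (c : ℝ) : IsLin (fun t => c * u t) :=
  ⟨fun x y => by simp only [hu.1, mul_add], fun r x => by simp only [hu.2, mul_left_comm]⟩

lemma IsLin.sum {ι : Type*} (s : Finset ι) {H : ι → V → ℝ} (hH : ∀ i, IsLin (H i)) :
    IsLin (fun t => ∑ i ∈ s, H i t) :=
  ⟨fun x y => by simp only [(hH _).1, Finset.sum_add_distrib],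
    fun r x => by simp only [(hH _).2, Finset.mul_sum]⟩

section Metric

open Matrix

variable {n : ℕ} {b : Module.Basis (Fin n) ℝ V} {g : V → V → ℝ}

variable (n b g) in
noncomputable def gram : Matrix (Fin n) (Fin n) ℝ := Matrix.of fun i j => g (b i) (b j)

lemma det_gram_ne_zero (hgb : IsBilin g) (hgnd : ∀ x : V, (∀ y : V, g x y = 0) → x = 0) :
    (gram n b g).det ≠ 0 := by
  intro hdet
  obtain ⟨v, hv, hvG⟩ := exists_vecMul_eq_zero_iff.2 hdet
  have hx : ∀ y, g (∑ i, v i • b i) y = 0 := fun y => by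
    rw [(hgb.2 _).eq_sum_repr b y]
    refine Finset.sum_eq_zero fun j _ => ?_
    rw [(hgb.1 (b j)).map_sum_smul, show ∑ i, v i * g (b i) (b j) = 0 from congrFun hvG j, mul_zero]
  exact hv (funext (Fintype.linearIndependent_iff.1 b.linearIndependent v (hgnd _ hx)))

lemma gram_mul_ginv (hgb : IsBilin g) (hgnd : ∀ x : V, (∀ y : V, g x y = 0) → x = 0) :
    gram n b g * ginv n b g = 1 :=
  mul_nonsing_inv _ (isUnit_iff_ne_zero.2 (det_gram_ne_zero hgb hgnd))

lemma ginv_comm (hgs : ∀ x y, g x y = g y x) (i j : Fin n) : ginv n b g i j = ginv n b g j i := by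
  have hG : (gram n b g)ᵀ = gram n b g := Matrix.ext fun i j => hgs _ _
  change _ = (gram n b g)⁻¹ᵀ i j
  rw [transpose_nonsing_inv, hG]
  rfl

lemma sum_ginv_mul_g (hgb : IsBilin g) (hgs : ∀ x y, g x y = g y x)
    (hgnd : ∀ x : V, (∀ y : V, g x y = 0) → x = 0) (y : V) (j : Fin n) :
    ∑ i, ginv n b g i j * g (b i) y = b.repr y j := by
  have hrow : (fun i => g y (b i)) = b.repr y ᵥ* gram n b g := funext fun i => by
    rw [(hgb.1 (b i)).eq_sum_repr b y]
    simp [vecMul, dotProduct, gram]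
  calc ∑ i, ginv n b g i j * g (b i) y
      = ((fun i => g y (b i)) ᵥ* ginv n b g) j := by
        simp only [vecMul, dotProduct, hgs y, mul_comm]
    _ = b.repr y j := by
        rw [hrow, vecMul_vecMul, gram_mul_ginv hgb hgnd, vecMul_one]

lemma sum_ginv_mul_g_mul (hgb : IsBilin g) (hgs : ∀ x y, g x y = g y x)
    (hgnd : ∀ x : V, (∀ y : V, g x y = 0) → x = 0) {u : V → ℝ} (hu : IsLin u) (y : V) :
    ∑ i, ∑ j, ginv n b g i j * (g (b i) y * u (b j)) = u y := by
  calc ∑ i, ∑ j, ginv n b g i j * (g (b i) y * u (b j))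
      = ∑ j, (∑ i, ginv n b g i j * g (b i) y) * u (b j) := by
        rw [Finset.sum_comm]
        simp only [Finset.sum_mul, mul_assoc]
    _ = u y := by simp only [sum_ginv_mul_g hgb hgs hgnd, ← hu.eq_sum_repr]

lemma trg_g (hgb : IsBilin g) (hgs : ∀ x y, g x y = g y x)
    (hgnd : ∀ x : V, (∀ y : V, g x y = 0) → x = 0) : trg n b g g = n := by
  rw [trg, Finset.sum_comm]
  simp [sum_ginv_mul_g hgb hgs hgnd]

end Metric

section Curvature

variable {n : ℕ} {b : Module.Basis (Fin n) ℝ V} {g : V → V → ℝ} {F : V → V → V → V → ℝ}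

lemma symB_eq_self {α : Type*} {h : α → α → ℝ} (hh : ∀ x y, h x y = h y x) : symB h = h := by
  funext x y
  simp only [symB, hh y x]
  ring

lemma lamB_eq_zero {α : Type*} {h : α → α → ℝ} (hh : ∀ x y, h x y = h y x) : lamB h = 0 := by
  funext x y
  simp only [lamB, hh y x, sub_self, zero_div, Pi.zero_apply]

lemma trg_add (h k : V → V → ℝ) : trg n b g (h + k) = trg n b g h + trg n b g k := by
  simp only [trg, Pi.add_apply, mul_add, Finset.sum_add_distrib]

lemma trg_sub (h k : V → V → ℝ) : trg n b g (h - k) = trg n b g h - trg n b g k := by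
  simp only [trg, Pi.sub_apply, mul_sub, Finset.sum_sub_distrib]

lemma trg_smul (c : ℝ) (h : V → V → ℝ) : trg n b g (c • h) = c * trg n b g h := by
  simp only [trg, Pi.smul_apply, smul_eq_mul, Finset.mul_sum, mul_left_comm]

lemma RicS_add (F G : V → V → V → V → ℝ) :
    RicS n b g (F + G) = RicS n b g F + RicS n b g G := by
  funext x y
  simp only [RicS, Pi.add_apply, mul_add, Finset.sum_add_distrib]

lemma RicS_smul (c : ℝ) (F : V → V → V → V → ℝ) : RicS n b g (c • F) = c • RicS n b g F := by
  funext x y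
  simp only [RicS, Pi.smul_apply, smul_eq_mul, Finset.mul_sum, mul_left_comm]

lemma RicS_zero : RicS n b g (0 : V → V → V → V → ℝ) = 0 := by
  simpa using RicS_smul (n := n) (b := b) (g := g) 0 0

lemma tau_eq_trg_Ric (F : V → V → V → V → ℝ) : tau n b g F = trg n b g (Ric n b g F) := by
  simp only [tau, trg, Ric, Finset.mul_sum]
  rw [Finset.sum_comm]
  refine Finset.sum_congr rfl fun j _ => ?_
  rw [Finset.sum_comm]
  exact Finset.sum_congr rfl fun k _ => Finset.sum_congr rfl fun i _ =>
    Finset.sum_congr rfl fun l _ => by ring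

lemma isLin_Ric (hF : IsMulti4 F) (x : V) : IsLin (Ric n b g F x) :=
  IsLin.sum _ fun i => IsLin.sum _ fun j => (hF.2.2.1 (b i) x (b j)).const_mul _

lemma Ric_conj (hskew : ∀ x y z w, F x y z w = -F y x z w) : Ric n b g (conj F) = RicS n b g F := by
  funext x y
  simp only [Ric, RicS, conj, hskew _ x, neg_neg]

lemma RicS_conj (hskew : ∀ x y z w, F x y z w = -F y x z w) : RicS n b g (conj F) = Ric n b g F := by
  funext x y
  simp only [Ric, RicS, conj, hskew x, neg_neg]

lemma RicS_wedge_zero (hgb : IsBilin g) (hgs : ∀ x y, g x y = g y x)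
    (hgnd : ∀ x : V, (∀ y : V, g x y = 0) → x = 0) {h : V → V → ℝ} (hh : ∀ x, IsLin (h x)) :
    RicS n b g (wedge 0 h g) = h - trg n b g h • g := by
  funext x y
  have hterm : ∀ i j, ginv n b g i j * wedge 0 h g x (b i) (b j) y
      = ginv n b g i j * (g (b i) y * h x (b j)) - g x y * (ginv n b g i j * h (b i) (b j)) :=
    fun i j => by simp only [wedge]; ring
  simp only [RicS, hterm, Finset.sum_sub_distrib, ← Finset.mul_sum,
    sum_ginv_mul_g_mul hgb hgs hgnd (hh x), Pi.sub_apply, Pi.smul_apply, smul_eq_mul, trg]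
  ring

lemma sum_ginv_mul_apply_last_pair (hF : F ∈ rSet V) (y z : V) :
    ∑ i, ∑ j, ginv n b g i j * F y z (b i) (b j) = Ric n b g F z y - Ric n b g F y z := by
  obtain ⟨-, hskew, hbianchi⟩ := hF
  have hterm : ∀ i j, ginv n b g i j * F y z (b i) (b j)
      = ginv n b g i j * F (b i) z y (b j) - ginv n b g i j * F (b i) y z (b j) := fun i j => by
    linear_combination ginv n b g i j * (hbianchi (b i) y z (b j) - hskew z (b i) y (b j))
  simp only [hterm, Finset.sum_sub_distrib, Ric]

lemma Ric_add_RicS_comm (hgs : ∀ x y, g x y = g y x) (hF : F ∈ rSet V) (hF' : conj F ∈ rSet V)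
    (x y : V) : Ric n b g F x y + RicS n b g F x y = Ric n b g F y x + RicS n b g F y x := by
  have hconj : ∑ i, ∑ j, ginv n b g i j * conj F x y (b i) (b j)
      = -∑ i, ∑ j, ginv n b g i j * F x y (b i) (b j) := by
    rw [Finset.sum_comm, ← Finset.sum_neg_distrib]
    exact Finset.sum_congr rfl fun i _ => by
      rw [← Finset.sum_neg_distrib]
      exact Finset.sum_congr rfl fun j _ => by rw [conj, ginv_comm hgs]; ring
  have hlast := sum_ginv_mul_apply_last_pair (n := n) (b := b) (g := g) hF' x y
  rw [hconj, sum_ginv_mul_apply_last_pair hF, Ric_conj hF.2.1] at hlast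
  linarith

lemma psi_add_mu (hF : F ∈ rSet V) (hF' : conj F ∈ rSet V) : psi F + mu F = F := by
  obtain ⟨-, hskew, hbianchi⟩ := hF
  have hbianchi' : ∀ x y z w, F x y w z + F y z w x + F z x w y = 0 := fun x y z w => by
    have h := hF'.2.2 x y z w
    simp only [conj] at h
    linarith
  funext x y z w
  simp only [psi, mu, Pi.add_apply]
  linear_combination -(3/8) * hskew x y z w + (1/4) * hbianchi' x y z w
    + (1/8) * hskew x y w z - (1/4) * hskew x z y w + (1/8) * hbianchi' x z y w
    - (1/4) * hskew x z w y + (1/4) * hbianchi x z w y + (1/4) * hbianchi' x z w y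
    - (1/4) * hskew x w y z + (3/8) * hbianchi' x w y z
    - (1/4) * hskew x w z y + (1/4) * hbianchi' x w z y - (1/4) * hbianchi y z w x

lemma pProj_eq_add_wedge (hric : ∀ x y, Ric n b g F x y = Ric n b g F y x) :
    pProj n b g F = F + ((1 : ℝ) / ((n : ℝ) - 1)) • wedge 0 (Ric n b g F) g := by
  funext x y z w
  simp only [pProj, pi1, pi2, pi3, symB_eq_self hric, lamB_eq_zero hric, wedge, prodB,
    Pi.add_apply, Pi.sub_apply, Pi.smul_apply, Pi.zero_apply, smul_eq_mul, div_eq_mul_inv, mul_inv]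
  ring

lemma pi5_add_pi6_add_pi7 (hn : 3 ≤ n) (hric : ∀ x y, Ric n b g F x y = Ric n b g F y x)
    (hricS : ∀ x y, RicS n b g F x y = RicS n b g F y x) :
    pi5 n b g F + pi6 n b g F + pi7 n b g F
      = psi F + mu F + ((1 : ℝ) / ((n : ℝ) - 1)) • wedge 0 (Ric n b g F) g := by
  have h3 : (3 : ℝ) ≤ n := by exact_mod_cast hn
  have hn0 : (n : ℝ) ≠ 0 := by linarith
  have hn1 : (n : ℝ) - 1 ≠ 0 := by linarith
  have hn2 : (n : ℝ) - 2 ≠ 0 := by linarith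
  funext x y z w
  simp only [pi5, pi6, pi7, psi, mu, wedge, prodB, lamB, symB, Pi.add_apply, Pi.sub_apply,
    Pi.smul_apply, smul_eq_mul]
  rw [hric z x, hric w x, hric z y, hric w y, hric y x,
    hricS z x, hricS w x, hricS z y, hricS w y, hricS y x]
  field_simp
  ring

lemma trg_zero : trg n b g (0 : V → V → ℝ) = 0 := by
  simp [trg]

lemma RicS_pProj (hgb : IsBilin g) (hgs : ∀ x y, g x y = g y x)
    (hgnd : ∀ x : V, (∀ y : V, g x y = 0) → x = 0) (hF : IsMulti4 F)
    (hric : ∀ x y, Ric n b g F x y = Ric n b g F y x) :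
    RicS n b g (pProj n b g F)
      = RicS n b g F + ((1 : ℝ) / ((n : ℝ) - 1)) • (Ric n b g F - tau n b g F • g) := by
  rw [pProj_eq_add_wedge hric, RicS_add, RicS_smul, RicS_wedge_zero hgb hgs hgnd (isLin_Ric hF),
    tau_eq_trg_Ric]

lemma eq_of_add_smul_sub_trg_smul_eq (hn : 3 ≤ n) (htrg : trg n b g g = n) {h k : V → V → ℝ}
    (hhk : h + ((1 : ℝ) / ((n : ℝ) - 1)) • (k - trg n b g k • g)
      = k + ((1 : ℝ) / ((n : ℝ) - 1)) • (h - trg n b g h • g)) : h = k := by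
  have h3 : (3 : ℝ) ≤ n := by exact_mod_cast hn
  set c : ℝ := 1 / ((n : ℝ) - 1)
  have hc : c * ((n : ℝ) - 1) = 1 := one_div_mul_cancel (by linarith)
  have htr := congrArg (trg n b g) hhk
  simp only [trg_add, trg_sub, trg_smul, htrg] at htr
  have htrhk : trg n b g h = trg n b g k := by linear_combination (htr + (trg n b g k - trg n b g h) * hc) / 2
  funext x y
  have hxy := congrFun (congrFun hhk x) y
  simp only [Pi.add_apply, Pi.sub_apply, Pi.smul_apply, smul_eq_mul, htrhk] at hxy
  have hc1 : 1 - c ≠ 0 := by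
    intro h1
    have : c * ((n : ℝ) - 1) = (n : ℝ) - 1 := by rw [← sub_eq_zero.mp h1] ; ring
    linarith
  exact mul_left_cancel₀ hc1 (by linear_combination hxy)

lemma add_smul_sub_trg_smul_eq_zero (hn : 2 ≤ n) (htrg : trg n b g g = n) {h k : V → V → ℝ}
    (hhk : h + ((1 : ℝ) / ((n : ℝ) - 1)) • (k - trg n b g k • g) = 0) :
    k + ((n : ℝ) - 1) • h - trg n b g h • g = 0 := by
  have h2 : (2 : ℝ) ≤ n := by exact_mod_cast hn
  set c : ℝ := 1 / ((n : ℝ) - 1)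
  have hc : c * ((n : ℝ) - 1) = 1 := one_div_mul_cancel (by linarith)
  have htr := congrArg (trg n b g) hhk
  simp only [trg_add, trg_sub, trg_smul, htrg, trg_zero] at htr
  have htrhk : trg n b g h = trg n b g k := by linear_combination htr + trg n b g k * hc
  funext x y
  have hxy := congrFun (congrFun hhk x) y
  simp only [Pi.add_apply, Pi.sub_apply, Pi.smul_apply, smul_eq_mul, Pi.zero_apply] at hxy ⊢
  rw [htrhk]
  linear_combination ((n : ℝ) - 1) * hxy - (k x y - trg n b g k * g x y) * hc

lemma RicS_comm_of_Ric_comm (hgs : ∀ x y, g x y = g y x) (hF : F ∈ rSet V)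
    (hF' : conj F ∈ rSet V) (hric : ∀ x y, Ric n b g F x y = Ric n b g F y x) (x y : V) :
    RicS n b g F x y = RicS n b g F y x := by
  linarith [Ric_add_RicS_comm (b := b) hgs hF hF' x y, hric x y]

lemma conj_eq_self_iff_mem_aSet (hF : F ∈ rSet V) : conj F = F ↔ F ∈ aSet V := by
  constructor
  · intro h
    refine ⟨hF, fun x y z w => ?_⟩
    have hxywz := congrFun (congrFun (congrFun (congrFun h x) y) w) z
    simp only [conj] at hxywz
    linarith
  · rintro ⟨-, ha⟩
    funext x y z w
    simp only [conj]
    linarith [ha x y w z]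

lemma conj_eq_self_of_pProj_conj_eq (hn : 3 ≤ n) (hgb : IsBilin g) (hgs : ∀ x y, g x y = g y x)
    (hgnd : ∀ x : V, (∀ y : V, g x y = 0) → x = 0) (hF : F ∈ rSet V) (hF' : conj F ∈ rSet V)
    (hric : ∀ x y, Ric n b g F x y = Ric n b g F y x)
    (hp : pProj n b g (conj F) = pProj n b g F) : conj F = F := by
  have hricC : ∀ x y, Ric n b g (conj F) x y = Ric n b g (conj F) y x := by
    rw [Ric_conj hF.2.1]
    exact RicS_comm_of_Ric_comm hgs hF hF' hric
  have hRicS := congrArg (RicS n b g) hp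
  rw [RicS_pProj hgb hgs hgnd hF'.1 hricC, RicS_pProj hgb hgs hgnd hF.1 hric, RicS_conj hF.2.1,
    tau_eq_trg_Ric, tau_eq_trg_Ric, Ric_conj hF.2.1] at hRicS
  have hRic := eq_of_add_smul_sub_trg_smul_eq hn (trg_g hgb hgs hgnd) hRicS
  rw [pProj_eq_add_wedge hricC, pProj_eq_add_wedge hric, Ric_conj hF.2.1, ← hRic] at hp
  exact add_right_cancel hp

lemma symB_RicS_add_Ric_sub_tau_smul_eq_zero (hn : 2 ≤ n) (hgb : IsBilin g)
    (hgs : ∀ x y, g x y = g y x) (hgnd : ∀ x : V, (∀ y : V, g x y = 0) → x = 0)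
    (hF : F ∈ rSet V) (hF' : conj F ∈ rSet V) (hric : ∀ x y, Ric n b g F x y = Ric n b g F y x)
    (hp : pProj n b g (conj F) = 0) :
    symB (RicS n b g F + ((n : ℝ) - 1) • Ric n b g F) - tau n b g F • g = 0 := by
  have hricS := RicS_comm_of_Ric_comm hgs hF hF' hric
  have hricC : ∀ x y, Ric n b g (conj F) x y = Ric n b g (conj F) y x := by
    rwa [Ric_conj hF.2.1]
  have hRicS := congrArg (RicS n b g) hp
  rw [RicS_pProj hgb hgs hgnd hF'.1 hricC, RicS_conj hF.2.1, tau_eq_trg_Ric, Ric_conj hF.2.1,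
    RicS_zero] at hRicS
  have hsymm : ∀ x y, (RicS n b g F + ((n : ℝ) - 1) • Ric n b g F) x y
      = (RicS n b g F + ((n : ℝ) - 1) • Ric n b g F) y x := fun x y => by
    simp only [Pi.add_apply, Pi.smul_apply, hricS x, hric x]
  rw [symB_eq_self hsymm, tau_eq_trg_Ric]
  exact add_smul_sub_trg_smul_eq_zero hn (trg_g hgb hgs hgnd) hRicS

end Curvature

theorem stmt10 {V : Type*} [AddCommGroup V] [Module ℝ V]
    (n : ℕ) (hn : 3 ≤ n) (b : Module.Basis (Fin n) ℝ V)
    (g : V → V → ℝ) (hgb : IsBilin g) (hgs : ∀ x y, g x y = g y x)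
    (hgnd : ∀ x : V, (∀ y : V, g x y = 0) → x = 0) :
    ∀ F ∈ rSet V, (∀ x y, Ric n b g F x y = Ric n b g F y x) →
      pProj n b g F = F + ((1 : ℝ) / ((n : ℝ) - 1)) • wedge 0 (Ric n b g F) g ∧
      (conj F ∈ rSet V →
        (pProj n b g F = pi5 n b g F + pi6 n b g F + pi7 n b g F) ∧
        (pProj n b g (conj F) = pProj n b g F ↔ conj F = F) ∧
        (conj F = F ↔ F ∈ aSet V)) ∧
      (conj F ∈ rSet V → pProj n b g (conj F) = 0 →
        symB (RicS n b g F + ((n : ℝ) - 1) • Ric n b g F) - (tau n b g F) • g = 0) := by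
  intro F hF hric
  refine ⟨pProj_eq_add_wedge hric, fun hF' => ⟨?_, ?_, conj_eq_self_iff_mem_aSet hF⟩,
    fun hF' => symB_RicS_add_Ric_sub_tau_smul_eq_zero (by omega) hgb hgs hgnd hF hF' hric⟩
  · rw [pi5_add_pi6_add_pi7 hn hric (RicS_comm_of_Ric_comm hgs hF hF' hric),
      psi_add_mu hF hF', pProj_eq_add_wedge hric]
  · exact ⟨conj_eq_self_of_pProj_conj_eq hn hgb hgs hgnd hF hF' hric, fun h => by rw [h]⟩

end GCT
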